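/- arXiv:2002.00587 — 3 statements merged into one kernel-verified Lean document; each statement's English description precedes it below -/
import Mathlib

section
/- Let k ≥ 1 and let f : ℝ → ℝ be a function such that for every choice of real numbers h₁, …, h_k the mixed difference Δ_{h₁…h_k} f is a continuous function on ℝ. Then there exist a continuous function g : ℝ → ℝ and a polynomial function H : ℝ → ℝ of order k with H(0) = 0 such that f = g + H. -/
/-!
Induction on `k`. By the induction hypothesis `Δ₁ f = v + K` with `v` continuous and `K` a
polynomial function of order `k - 1`. Subtracting a continuous solution `V` of
`V (x + 1) - V x = v x` gives `f₁ = f - V` with `Δ₁ f₁ = K`, so the `k`-th differences of `f₁` are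
continuous and `1`-periodic. Their means `c (h₁, …, h_k) = ∫₀¹ Δ_{h₁…h_k} f₁` form a symmetric
`k`-additive form, and `P x = c (x, …, x) / k!` is a polynomial function with
`Δ_{h₁…h_k} P = c (h₁, …, h_k)`. Every `(k-1)`-th difference `F` of `f₁` has continuous first
differences and constant `Δ₁ F`; for such `F` the Baire category theorem bounds
`F (x + h) - F x - F h + F 0` uniformly, so by dominated convergence `x ↦ F x - ∫₀¹ Δ_x F` is
continuous. This makes the `(k-1)`-th differences of `f₁ - P` continuous, and the induction
hypothesis applied to `f₁ - P` finishes the proof.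
-/

/-- The simple difference operator `Δ_h f (x) = f (x + h) - f x`. -/
def simpleDiff (h : ℝ) (f : ℝ → ℝ) : ℝ → ℝ := fun x => f (x + h) - f x

/-- The mixed difference operator `Δ_{h₁ … h_m} f := Δ_{h_m} (Δ_{h₁ … h_{m-1}} f)`. -/
def mixedDiff : (m : ℕ) → (Fin m → ℝ) → (ℝ → ℝ) → (ℝ → ℝ)
  | 0, _, f => f
  | m + 1, h, f => simpleDiff (h (Fin.last m)) (mixedDiff m (fun i => h i.castSucc) f)

/-- `f` is a polynomial function of order `k` if `Δ_h^{k+1} f = 0` for every `h`. -/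
def IsPolynomialFunction (k : ℕ) (f : ℝ → ℝ) : Prop :=
  ∀ x h : ℝ, (simpleDiff h)^[k + 1] f x = 0

open Multiset

lemma simpleDiff_apply (h : ℝ) (f : ℝ → ℝ) (x : ℝ) : simpleDiff h f x = f (x + h) - f x := rfl

def simpleDiffₗ (h : ℝ) : Module.End ℝ (ℝ → ℝ) where
  toFun := simpleDiff h
  map_add' f g := by
    ext x
    simp only [simpleDiff_apply, Pi.add_apply]
    ring
  map_smul' c f := by
    ext x
    simp only [simpleDiff_apply, Pi.smul_apply, smul_eq_mul, RingHom.id_apply]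
    ring

lemma simpleDiffₗ_apply (h : ℝ) (f : ℝ → ℝ) : simpleDiffₗ h f = simpleDiff h f := rfl

lemma commute_simpleDiffₗ (a b : ℝ) : Commute (simpleDiffₗ a) (simpleDiffₗ b) := by
  ext f x
  simp only [Module.End.mul_apply, simpleDiffₗ_apply, simpleDiff_apply]
  ring_nf

lemma simpleDiff_add_apply (a b : ℝ) (f : ℝ → ℝ) (x : ℝ) :
    simpleDiff (a + b) f x = simpleDiff a f (x + b) + simpleDiff b f x := by
  simp only [simpleDiff_apply]; ring_nf

def multiDiff (s : Multiset ℝ) : Module.End ℝ (ℝ → ℝ) :=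
  (s.map simpleDiffₗ).noncommProd fun _ ha _ hb _ => by
    obtain ⟨a, -, rfl⟩ := mem_map.1 ha
    obtain ⟨b, -, rfl⟩ := mem_map.1 hb
    exact commute_simpleDiffₗ a b

@[simp] lemma multiDiff_zero : multiDiff 0 = 1 := rfl

lemma multiDiff_cons (a : ℝ) (s : Multiset ℝ) :
    multiDiff (a ::ₘ s) = simpleDiffₗ a * multiDiff s := by
  simp only [multiDiff, map_cons, noncommProd_cons]

lemma multiDiff_singleton (a : ℝ) : multiDiff {a} = simpleDiffₗ a := by
  simpa using multiDiff_cons a 0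

lemma multiDiff_cons_apply (a : ℝ) (s : Multiset ℝ) (f : ℝ → ℝ) :
    multiDiff (a ::ₘ s) f = simpleDiff a (multiDiff s f) := by
  rw [multiDiff_cons]; rfl

lemma multiDiff_add (s t : Multiset ℝ) : multiDiff (s + t) = multiDiff s * multiDiff t := by
  simp only [multiDiff, Multiset.map_add, noncommProd_add]

lemma multiDiff_simpleDiff (s : Multiset ℝ) (a : ℝ) (f : ℝ → ℝ) :
    multiDiff s (simpleDiff a f) = simpleDiff a (multiDiff s f) := by
  rw [← multiDiff_cons_apply, ← singleton_add, add_comm, multiDiff_add, Module.End.mul_apply,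
    multiDiff_singleton, simpleDiffₗ_apply]

lemma continuous_multiDiff (s : Multiset ℝ) {f : ℝ → ℝ} (hf : Continuous f) :
    Continuous (multiDiff s f) := by
  induction s using Multiset.induction_on with
  | empty => exact hf
  | cons a s ih =>
    rw [multiDiff_cons_apply]
    exact (ih.comp (continuous_add_const a)).sub ih

lemma multiDiff_cons_eq_zero {s : Multiset ℝ} {f : ℝ → ℝ} (hs : multiDiff s f = 0) (a : ℝ) :
    multiDiff (a ::ₘ s) f = 0 := by
  rw [multiDiff_cons, Module.End.mul_apply, hs, LinearMap.map_zero]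

lemma multiDiff_cons_eq_zero_of_eq_const {s : Multiset ℝ} {f : ℝ → ℝ} {c : ℝ}
    (hs : ∀ x, multiDiff s f x = c) (a : ℝ) : multiDiff (a ::ₘ s) f = 0 := by
  ext x
  rw [multiDiff_cons_apply, simpleDiff_apply, hs, hs, sub_self, Pi.zero_apply]

lemma mixedDiff_eq_multiDiff : ∀ (k : ℕ) (h : Fin k → ℝ) (f : ℝ → ℝ),
    mixedDiff k h f = multiDiff (List.ofFn h) f
  | 0, _, _ => rfl
  | k + 1, h, f => by
    rw [mixedDiff, mixedDiff_eq_multiDiff k, List.ofFn_succ', List.concat_eq_append,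
      ← coe_add, add_comm, coe_singleton, singleton_add, multiDiff_cons_apply]

lemma iterate_simpleDiff_eq_multiDiff (h : ℝ) (n : ℕ) (f : ℝ → ℝ) :
    (simpleDiff h)^[n] f = multiDiff (replicate n h) f := by
  induction n with
  | zero => rfl
  | succ n ih => rw [Function.iterate_succ_apply', ih, replicate_succ, multiDiff_cons_apply]

lemma continuous_multiDiff_of_mixedDiff {k : ℕ} {f : ℝ → ℝ}
    (hf : ∀ h : Fin k → ℝ, Continuous (mixedDiff k h f)) {s : Multiset ℝ} (hs : card s = k) :
    Continuous (multiDiff s f) := by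
  obtain ⟨l, rfl⟩ := Quot.exists_rep s
  have hl : l.length = k := hs
  subst hl
  simpa [mixedDiff_eq_multiDiff] using hf l.get

open Filter in
lemma continuous_floor_fract {X : Type*} [TopologicalSpace X] {F : ℤ → ℝ → X}
    (hF : ∀ n, Continuous (F n)) (hglue : ∀ n, F (n + 1) 0 = F n 1) :
    Continuous fun x => F ⌊x⌋ (Int.fract x) := by
  have hfin : LocallyFinite fun n : ℤ => Set.Icc (n : ℝ) (n + 1) :=
    locallyFinite_Icc_of_tendsto tendsto_intCast_atTop_atTop
      (tendsto_atBot_add_const_right _ 1 (tendsto_intCast_atBot_iff.2 tendsto_id))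
  refine hfin.continuous ?_ (fun _ => isClosed_Icc) fun n => ?_
  · refine Set.eq_univ_of_forall fun x => Set.mem_iUnion.2 ⟨⌊x⌋, Int.floor_le x, ?_⟩
    exact (Int.lt_floor_add_one x).le
  · refine ((hF n).comp (continuous_sub_right (n : ℝ))).continuousOn.congr fun x hx => ?_
    rcases hx.2.lt_or_eq with hlt | rfl
    · have hfloor : ⌊x⌋ = n := Int.floor_eq_iff.2 ⟨hx.1, hlt⟩
      simp [Int.fract, hfloor]
    · have hx : ((n : ℝ) + 1) = ((n + 1 : ℤ) : ℝ) := by push_cast; ring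
      rw [hx, Int.floor_intCast, Int.fract_intCast, hglue]
      congr 1
      push_cast; ring

section SignedSum

variable {M : Type*} [AddCommGroup M]

noncomputable def signedSum (a : ℤ → M) (n : ℤ) : M :=
  ∑ i ∈ Finset.Ico 0 n, a i - ∑ i ∈ Finset.Ico n 0, a i

@[simp] lemma signedSum_zero (a : ℤ → M) : signedSum a 0 = 0 := by simp [signedSum]

lemma signedSum_add_one (a : ℤ → M) (n : ℤ) : signedSum a (n + 1) = signedSum a n + a n := by
  rcases le_or_gt 0 n with hn | hn
  · rw [signedSum, signedSum, Finset.Ico_eq_empty_of_le hn,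
      Finset.Ico_eq_empty_of_le (by omega : (0 : ℤ) ≤ n + 1),
      ← Finset.sum_Ico_add_eq_sum_Ico_add_one hn]
    simp
  · rw [signedSum, signedSum, Finset.Ico_eq_empty_of_le hn.le,
      Finset.Ico_eq_empty_of_le (by omega : n + 1 ≤ 0),
      ← Finset.insert_Ico_add_one_left_eq_Ico hn, Finset.sum_insert (by simp)]
    abel

lemma signedSum_comp_add_one (a : ℤ → M) (n : ℤ) :
    signedSum (fun i => a (i + 1)) n = signedSum a (n + 1) - a 0 := by
  induction n using Int.induction_on with
  | zero => simp [show signedSum a 1 = a 0 by simpa using signedSum_add_one a 0]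
  | succ n ih => rw [signedSum_add_one, ih, signedSum_add_one a (n + 1)]; abel
  | pred n ih =>
    have h₁ := signedSum_add_one (fun i => a (i + 1)) (-n - 1)
    simp only [sub_add_cancel] at h₁ ⊢
    rw [eq_sub_of_add_eq h₁.symm, ih, signedSum_add_one]
    abel

end SignedSum

theorem exists_continuous_simpleDiff_one_eq {v : ℝ → ℝ} (hv : Continuous v) :
    ∃ V : ℝ → ℝ, Continuous V ∧ simpleDiff 1 V = v := by
  -- `V (n + s) = s * v 0 + v s + ⋯ + v (s + n - 1)` for `s ∈ [0, 1)`; the term `s * v 0` makes the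
  -- pieces on consecutive unit intervals agree at the integers.
  set F : ℤ → ℝ → ℝ := fun n s => s * v 0 + signedSum (fun i => v (s + i)) n with hF
  have hglue (n : ℤ) : F (n + 1) 0 = F n 1 := by
    simp only [hF, signedSum_add_one, zero_mul, zero_add, one_mul]
    have := signedSum_comp_add_one (fun i => v i) n
    simp only [Int.cast_add, Int.cast_one, Int.cast_zero] at this
    simp only [add_comm (1 : ℝ), this, signedSum_add_one]
    ring
  refine ⟨fun x => F ⌊x⌋ (Int.fract x), continuous_floor_fract (fun n => ?_) hglue, ?_⟩
  · simp only [hF, signedSum]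
    fun_prop
  · ext x
    simp only [simpleDiff_apply, hF, Int.floor_add_one, Int.fract_add_one, signedSum_add_one,
      Int.fract_add_floor]
    ring

section SecondDiff

open Metric Pointwise MeasureTheory

variable {F : ℝ → ℝ}

def secondDiff (F : ℝ → ℝ) (x h : ℝ) : ℝ := F (x + h) - F x - F h + F 0

lemma secondDiff_comm (x h : ℝ) : secondDiff F x h = secondDiff F h x := by
  simp only [secondDiff, add_comm x h]; ring

lemma secondDiff_sub (x a b : ℝ) : secondDiff F x (a - b) =
    secondDiff F x a - secondDiff F (x + a - b) b + secondDiff F (a - b) b := by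
  simp only [secondDiff, sub_add_cancel, ← add_sub_assoc]; ring

lemma secondDiff_eq_simpleDiff (x h : ℝ) :
    secondDiff F x h = simpleDiff h F x - (F h - F 0) := by
  simp only [secondDiff, simpleDiff_apply]; ring

lemma continuous_secondDiff_left (hF : ∀ h, Continuous (simpleDiff h F)) (h : ℝ) :
    Continuous (secondDiff F · h) := by
  simp only [secondDiff_eq_simpleDiff]
  exact (hF h).sub continuous_const

lemma continuous_secondDiff_right (hF : ∀ h, Continuous (simpleDiff h F)) (x : ℝ) :
    Continuous (secondDiff F x ·) := by
  simpa only [secondDiff_comm x] using continuous_secondDiff_left hF x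

lemma periodic_secondDiff_left (h1 : ∀ x, simpleDiff 1 F x = simpleDiff 1 F 0) (h : ℝ) :
    Function.Periodic (secondDiff F · h) 1 := by
  intro x
  have hx := h1 x
  have hxh := h1 (x + h)
  simp only [simpleDiff_apply, zero_add] at hx hxh
  simp only [secondDiff, add_right_comm x 1 h]
  linarith

def BoundedSecondDiffOn (F : ℝ → ℝ) (A : Set ℝ) : Prop :=
  ∃ C, ∀ h ∈ A, ∀ x, |secondDiff F x h| ≤ C

lemma BoundedSecondDiffOn.mono {A B : Set ℝ} (hB : BoundedSecondDiffOn F B) (hAB : A ⊆ B) :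
    BoundedSecondDiffOn F A :=
  let ⟨C, hC⟩ := hB; ⟨C, fun h hh => hC h (hAB hh)⟩

lemma BoundedSecondDiffOn.sub {A B : Set ℝ} (hA : BoundedSecondDiffOn F A)
    (hB : BoundedSecondDiffOn F B) : BoundedSecondDiffOn F (A - B) := by
  obtain ⟨C, hC⟩ := hA
  obtain ⟨D, hD⟩ := hB
  refine ⟨C + 2 * D, ?_⟩
  rintro _ ⟨a, ha, b, hb, rfl⟩ x
  rw [secondDiff_sub]
  have := hC a ha x
  have := hD b hb (x + a - b)
  have := hD b hb (a - b)
  have := abs_add_le (secondDiff F x a - secondDiff F (x + a - b) b) (secondDiff F (a - b) b)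
  have := abs_sub (secondDiff F x a) (secondDiff F (x + a - b) b)
  linarith

lemma exists_ball_boundedSecondDiffOn (hF : ∀ h, Continuous (simpleDiff h F))
    (h1 : ∀ x, simpleDiff 1 F x = simpleDiff 1 F 0) :
    ∃ h₀, ∃ ε > 0, BoundedSecondDiffOn F (ball h₀ ε) := by
  set E : ℕ → Set ℝ := fun M => {h | ∀ x, |secondDiff F x h| ≤ M}
  have hclosed (M : ℕ) : IsClosed (E M) := by
    simp only [E, Set.ofPred_forall]
    exact isClosed_iInter fun x => isClosed_le (continuous_secondDiff_right hF x).abs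
      continuous_const
  have hcover : ⋃ M, E M = Set.univ := by
    refine Set.eq_univ_of_forall fun h => Set.mem_iUnion.2 ?_
    obtain ⟨C, hC⟩ := isBounded_iff_forall_norm_le.1 <|
      (periodic_secondDiff_left h1 h).isBounded_of_continuous one_ne_zero
        (continuous_secondDiff_left hF h)
    obtain ⟨M, hM⟩ := exists_nat_ge C
    exact ⟨M, fun x => (hC _ ⟨x, rfl⟩).trans hM⟩
  obtain ⟨M, h₀, hh₀⟩ := nonempty_interior_of_iUnion_of_closed hclosed hcover
  obtain ⟨ε, hε, hball⟩ := Metric.mem_nhds_iff.1 (mem_interior_iff_mem_nhds.1 hh₀)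
  exact ⟨h₀, ε, hε, M, fun h hh => hball hh⟩

lemma exists_bound_secondDiff (hF : ∀ h, Continuous (simpleDiff h F))
    (h1 : ∀ x, simpleDiff 1 F x = simpleDiff 1 F 0) :
    ∃ C, ∀ x h, |secondDiff F x h| ≤ C := by
  obtain ⟨h₀, ε, hε, hB⟩ := exists_ball_boundedSecondDiffOn hF h1
  have hB₀ : BoundedSecondDiffOn F (ball 0 ε) := by
    refine (hB.sub hB).mono fun s hs => ⟨h₀ + s, ?_, h₀, mem_ball_self hε, by ring⟩
    simpa [Real.dist_eq] using hs
  have hdouble (n : ℕ) : BoundedSecondDiffOn F (ball 0 (2 ^ n * ε)) := by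
    induction n with
    | zero => simpa using hB₀
    | succ n ih =>
      refine (ih.sub ih).mono fun s hs => ⟨s / 2, ?_, -(s / 2), ?_, by ring⟩ <;>
      · simp only [mem_ball, Real.dist_eq, sub_zero, abs_neg, abs_div, abs_two, pow_succ] at hs ⊢
        linarith
  obtain ⟨n, hn⟩ := pow_unbounded_of_one_lt ε⁻¹ one_lt_two
  obtain ⟨C, hC⟩ := hdouble n
  refine ⟨C, fun x h => ?_⟩
  have hper : secondDiff F x h = secondDiff F x (Int.fract h) := by
    have := (periodic_secondDiff_left h1 x).sub_int_mul_eq (x := h) ⌊h⌋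
    rw [mul_one, Int.self_sub_floor] at this
    rw [secondDiff_comm, ← this, secondDiff_comm]
  rw [hper]
  refine hC _ ?_ x
  rw [mem_ball, Real.dist_eq, sub_zero, abs_of_nonneg (Int.fract_nonneg h)]
  calc Int.fract h < 1 := Int.fract_lt_one h
    _ < 2 ^ n * ε := by rwa [inv_lt_iff_one_lt_mul₀ hε] at hn

theorem continuous_sub_integral_simpleDiff (hF : ∀ h, Continuous (simpleDiff h F))
    (h1 : ∀ x, simpleDiff 1 F x = simpleDiff 1 F 0) :
    Continuous fun x => F x - ∫ t in (0 : ℝ)..1, simpleDiff x F t := by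
  obtain ⟨C, hC⟩ := exists_bound_secondDiff hF h1
  have hint : Continuous fun x => ∫ h in (0 : ℝ)..1, secondDiff F x h :=
    intervalIntegral.continuous_of_dominated_interval
      (fun x => (continuous_secondDiff_right hF x).aestronglyMeasurable)
      (fun x => ae_of_all _ fun h _ => hC x h) intervalIntegrable_const
      (ae_of_all _ fun h _ => continuous_secondDiff_left hF h)
  have heq (x : ℝ) : F x - ∫ t in (0 : ℝ)..1, simpleDiff x F t
      = F 0 - ∫ h in (0 : ℝ)..1, secondDiff F x h := by
    simp only [secondDiff_comm x, secondDiff_eq_simpleDiff]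
    rw [intervalIntegral.integral_sub ((hF x).intervalIntegrable 0 1)
      intervalIntegrable_const, intervalIntegral.integral_const, sub_zero, one_smul]
    ring
  exact (continuous_const.sub hint).congr fun x => (heq x).symm

end SecondDiff

section AdditiveForm

/-- A symmetric form in `n + 1` real variables that is additive in each of them, seen as a
function of the multiset of its arguments; only its values on multisets of cardinality `n + 1`
matter. -/
def IsAdditiveForm (n : ℕ) (c : Multiset ℝ → ℝ) : Prop :=
  ∀ a b s, card s = n → c ((a + b) ::ₘ s) = c (a ::ₘ s) + c (b ::ₘ s)

def formDiag (c : Multiset ℝ → ℝ) (t : Multiset ℝ) (r : ℕ) (x : ℝ) : ℝ := c (t + replicate r x)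

variable {n : ℕ} {c : Multiset ℝ → ℝ}

lemma formDiag_add_eq_sum_choose (hc : IsAdditiveForm n c) (a x : ℝ) :
    ∀ r t, card t + r = n + 1 → formDiag c t r (x + a) =
      ∑ i ∈ Finset.range (r + 1), (r.choose i : ℝ) * formDiag c (t + replicate i a) (r - i) x := by
  intro r
  induction r with
  | zero => simp [formDiag]
  | succ r ih =>
    intro t ht
    have hsplit : formDiag c t (r + 1) (x + a)
        = formDiag c (x ::ₘ t) r (x + a) + formDiag c (a ::ₘ t) r (x + a) := by
      simp only [formDiag, replicate_succ, add_cons, cons_add]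
      exact hc x a _ (by simp; omega)
    rw [hsplit, ih _ (by simp; omega), ih _ (by simp; omega),
      Finset.sum_choose_succ_mul (fun i j => formDiag c (t + replicate i a) j x)]
    congr 1
    · refine Finset.sum_congr rfl fun i hi => ?_
      rw [Finset.mem_range] at hi
      simp only [formDiag, show r + 1 - i = r - i + 1 by omega, replicate_succ, add_cons,
        cons_add]
    · simp only [formDiag, replicate_succ, add_cons, cons_add]

lemma simpleDiff_formDiag (hc : IsAdditiveForm n c) (a : ℝ) {r : ℕ} {t : Multiset ℝ}
    (ht : card t + r = n + 1) :
    simpleDiff a (formDiag c t r) = ∑ i ∈ Finset.range r,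
      (r.choose (i + 1) : ℝ) • formDiag c (t + replicate (i + 1) a) (r - (i + 1)) := by
  ext x
  rw [simpleDiff_apply, formDiag_add_eq_sum_choose hc a x r t ht, Finset.sum_range_succ']
  simp [formDiag, Finset.sum_apply]

lemma multiDiff_formDiag_eq_zero (hc : IsAdditiveForm n c) (s : Multiset ℝ) :
    ∀ t r, card t + r = n + 1 → r < card s → multiDiff s (formDiag c t r) = 0 := by
  induction s using Multiset.induction_on with
  | empty => simp
  | cons a s ih =>
    intro t r ht hr
    rw [multiDiff_cons_apply, ← multiDiff_simpleDiff, simpleDiff_formDiag hc a ht, map_sum]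
    refine Finset.sum_eq_zero fun i hi => ?_
    rw [Finset.mem_range] at hi
    rw [map_smul, ih _ _ (by simp; omega) (by simp at hr; omega), smul_zero]

lemma multiDiff_formDiag (hc : IsAdditiveForm n c) (s : Multiset ℝ) :
    ∀ t, card t + card s = n + 1 → ∀ x,
      multiDiff s (formDiag c t (card s)) x = (card s).factorial * c (t + s) := by
  induction s using Multiset.induction_on with
  | empty => simp [formDiag]
  | cons a s ih =>
    intro t ht x
    rw [card_cons] at ht ⊢
    have hhigher : ∀ i ∈ Finset.range (card s), multiDiff s
        (((card s + 1).choose (i + 1 + 1) : ℝ) •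
          formDiag c (t + replicate (i + 1 + 1) a) (card s + 1 - (i + 1 + 1))) = 0 := by
      intro i hi
      rw [Finset.mem_range] at hi
      rw [map_smul, multiDiff_formDiag_eq_zero hc _ _ _ (by simp; omega) (by omega), smul_zero]
    rw [multiDiff_cons_apply, ← multiDiff_simpleDiff, simpleDiff_formDiag hc a ht,
      Finset.sum_range_succ', LinearMap.map_add, map_sum, Finset.sum_eq_zero hhigher, zero_add,
      map_smul, Pi.smul_apply, smul_eq_mul, Nat.add_sub_cancel, ih _ (by simp; omega)]
    rw [zero_add, Nat.choose_one_right, replicate_one, add_assoc, singleton_add,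
      Nat.factorial_succ]
    push_cast; ring

theorem exists_multiDiff_eq_of_isAdditiveForm (hc : IsAdditiveForm n c) :
    ∃ P : ℝ → ℝ, P 0 = 0 ∧ ∀ s, card s = n + 1 → ∀ x, multiDiff s P x = c s := by
  refine ⟨((n + 1).factorial : ℝ)⁻¹ • formDiag c 0 (n + 1), ?_, fun s hs x => ?_⟩
  · have h := hc 0 0 (replicate n 0) (card_replicate n 0)
    rw [add_zero] at h
    simp [formDiag, replicate_succ, show c (0 ::ₘ replicate n 0) = 0 by linarith]
  · rw [map_smul, Pi.smul_apply, ← hs, multiDiff_formDiag hc s 0 (by simp [hs]), zero_add,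
      smul_eq_mul, inv_mul_cancel_left₀ (by positivity)]

end AdditiveForm

section MainInduction

noncomputable def meanDiff (f : ℝ → ℝ) (s : Multiset ℝ) : ℝ :=
  ∫ t in (0 : ℝ)..1, multiDiff s f t

variable {m : ℕ} {f K : ℝ → ℝ}

lemma periodic_multiDiff (hK : ∀ s, card s = m + 1 → multiDiff s K = 0) (hfK : simpleDiff 1 f = K)
    {s : Multiset ℝ} (hs : card s = m + 1) : Function.Periodic (multiDiff s f) 1 := by
  intro x
  have h := congrFun (hK s hs) x
  rw [← hfK, multiDiff_simpleDiff, simpleDiff_apply, Pi.zero_apply, sub_eq_zero] at h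
  exact h

lemma isAdditiveForm_meanDiff (hf : ∀ s, card s = m + 1 → Continuous (multiDiff s f))
    (hK : ∀ s, card s = m + 1 → multiDiff s K = 0) (hfK : simpleDiff 1 f = K) :
    IsAdditiveForm m (meanDiff f) := by
  intro a b s hs
  have hper := periodic_multiDiff hK hfK (s := a ::ₘ s) (by simp [hs])
  have hca := hf (a ::ₘ s) (by simp [hs])
  have hcb := hf (b ::ₘ s) (by simp [hs])
  rw [multiDiff_cons_apply] at hper hca hcb
  have hca' : Continuous fun x => simpleDiff a (multiDiff s f) (x + b) :=
    hca.comp (continuous_add_const b)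
  simp only [meanDiff, multiDiff_cons_apply, simpleDiff_add_apply]
  rw [intervalIntegral.integral_add (hca'.intervalIntegrable 0 1) (hcb.intervalIntegrable 0 1),
    intervalIntegral.integral_comp_add_right, zero_add, add_comm 1 b,
    hper.intervalIntegral_add_eq b 0, zero_add]

lemma continuous_multiDiff_sub (hf : ∀ s, card s = m + 1 → Continuous (multiDiff s f))
    (hK : ∀ s, card s = m + 1 → multiDiff s K = 0) (hfK : simpleDiff 1 f = K) {P : ℝ → ℝ}
    (hP : ∀ s, card s = m + 1 → ∀ x, multiDiff s P x = meanDiff f s)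
    {t : Multiset ℝ} (ht : card t = m) : Continuous (multiDiff t (f - P)) := by
  set G := multiDiff t f
  have hG (y : ℝ) : Continuous (simpleDiff y G) := by
    simpa [G, multiDiff_cons_apply] using hf (y ::ₘ t) (by simp [ht])
  have hKt (x : ℝ) : multiDiff t K x = multiDiff t K 0 := by
    have h := congrFun (hK (x ::ₘ t) (by simp [ht])) 0
    rwa [multiDiff_cons_apply, simpleDiff_apply, zero_add, Pi.zero_apply, sub_eq_zero] at h
  have hG1 (x : ℝ) : simpleDiff 1 G x = simpleDiff 1 G 0 := by
    rw [← multiDiff_simpleDiff, hfK, hKt x]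
  have hPt (x : ℝ) : multiDiff t P x = multiDiff t P 0 + meanDiff f (x ::ₘ t) := by
    have h := hP (x ::ₘ t) (by simp [ht]) 0
    rw [multiDiff_cons_apply, simpleDiff_apply, zero_add] at h
    linarith
  have heq : multiDiff t (f - P)
      = fun x => (G x - ∫ s in (0 : ℝ)..1, simpleDiff x G s) - multiDiff t P 0 := by
    ext x
    rw [map_sub, Pi.sub_apply, hPt, meanDiff, multiDiff_cons_apply]
    ring
  rw [heq]
  exact (continuous_sub_integral_simpleDiff hG hG1).sub continuous_const

theorem exists_continuous_add_multiDiff_eq_zero (k : ℕ) :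
    ∀ f : ℝ → ℝ, (∀ s, card s = k → Continuous (multiDiff s f)) →
      ∃ g H : ℝ → ℝ, Continuous g ∧ (∀ s, card s = k + 1 → multiDiff s H = 0) ∧ H 0 = 0 ∧
        f = g + H := by
  induction k with
  | zero =>
    intro f hf
    exact ⟨f, 0, hf 0 rfl, fun s _ => map_zero _, rfl, (add_zero f).symm⟩
  | succ m ih =>
    intro f hf
    obtain ⟨v, K, hv, hK, -, hvK⟩ := ih (simpleDiff 1 f) fun s hs => by
      simpa [multiDiff_simpleDiff, multiDiff_cons_apply] using hf (1 ::ₘ s) (by simp [hs])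
    obtain ⟨V, hV, hVv⟩ := exists_continuous_simpleDiff_one_eq hv
    set f₁ := f - V
    have hf₁K : simpleDiff 1 f₁ = K := by
      rw [← simpleDiffₗ_apply, map_sub, simpleDiffₗ_apply, simpleDiffₗ_apply, hvK, hVv,
        add_sub_cancel_left]
    have hf₁ (s : Multiset ℝ) (hs : card s = m + 1) : Continuous (multiDiff s f₁) := by
      rw [map_sub]
      exact (hf s hs).sub (continuous_multiDiff s hV)
    obtain ⟨P, hP0, hP⟩ :=
      exists_multiDiff_eq_of_isAdditiveForm (isAdditiveForm_meanDiff hf₁ hK hf₁K)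
    obtain ⟨g, H, hg, hH, hH0, hf₂⟩ :=
      ih (f₁ - P) fun t ht => continuous_multiDiff_sub hf₁ hK hf₁K hP ht
    refine ⟨V + g, P + H, hV.add hg, fun s hs => ?_, by simp [hP0, hH0], ?_⟩
    · obtain ⟨a, s, rfl, hs'⟩ := card_eq_succ_iff.1 hs
      rw [LinearMap.map_add, multiDiff_cons_eq_zero_of_eq_const (hP s hs') a,
        multiDiff_cons_eq_zero (hH s hs') a, add_zero]
    · rw [show f = V + (f₁ - P) + P by simp only [f₁]; abel, hf₂]
      abel

end MainInduction

theorem difference_property_of_kth_order_general (k : ℕ) (f : ℝ → ℝ)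
    (hf : ∀ h : Fin k → ℝ, Continuous (mixedDiff k h f)) :
    ∃ g H : ℝ → ℝ, Continuous g ∧ IsPolynomialFunction k H ∧ H 0 = 0 ∧
      ∀ x : ℝ, f x = g x + H x := by
  obtain ⟨g, H, hg, hH, hH0, hfgH⟩ := exists_continuous_add_multiDiff_eq_zero k f
    fun s hs => continuous_multiDiff_of_mixedDiff hf hs
  refine ⟨g, H, hg, fun x h => ?_, hH0, fun x => congrFun hfgH x⟩
  rw [iterate_simpleDiff_eq_multiDiff, hH _ (card_replicate _ _), Pi.zero_apply]

/-- Theorem 3.1: if every mixed difference of order `k` of `f : ℝ → ℝ` is continuous,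
then `f = g + H` with `g` continuous and `H` a polynomial function of order `k`
vanishing at `0`. -/
theorem difference_property_of_kth_order (k : ℕ) (hk : 1 ≤ k) (f : ℝ → ℝ)
    (hf : ∀ h : Fin k → ℝ, Continuous (mixedDiff k h f)) :
    ∃ g H : ℝ → ℝ, Continuous g ∧ IsPolynomialFunction k H ∧ H 0 = 0 ∧
      ∀ x : ℝ, f x = g x + H x :=
  difference_property_of_kth_order_general k f hf
end

section
/- Let k ≥ 1 and p ≥ 1, let f : ℝ → ℝ be a polynomial function of order k, and fix real numbers ξ₁, …, ξ_p. Then the function g(x₁,…,x_p) = f(ξ₁x₁ + ⋯ + ξ_p x_p), considered on the set ℚᵖ of vectors with rational coordinates, is an ordinary polynomial of degree at most k; that is, there exists a real multivariate polynomial P in p variables of total degree at most k such that f(ξ₁x₁ + ⋯ + ξ_p x_p) = P(x₁,…,x_p) for all (x₁,…,x_p) ∈ ℚᵖ. -/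
open Polynomial Finset

section ForwardDifference

variable {M N G : Type*} [AddCommMonoid M] [AddCommMonoid N] [AddCommGroup G]

theorem fwdDiff_iter_comp_of_map_add {φ : M → N} {h : M} {h' : N}
    (hφ : ∀ y, φ (y + h) = φ y + h') (f : N → G) (n : ℕ) :
    (fwdDiff h)^[n] (fun y => f (φ y)) = fun y => (fwdDiff h')^[n] f (φ y) := by
  induction n generalizing f with
  | zero => rfl
  | succ n ih =>
    have hΔ : fwdDiff h (fun y => f (φ y)) = fun y => fwdDiff h' f (φ y) :=
      funext fun y => by simp [fwdDiff, hφ]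
    rw [Function.iterate_succ_apply, Function.iterate_succ_apply, hΔ, ih]

theorem fwdDiff_iter_hom_comp {G' F : Type*} [AddCommGroup G'] [FunLike F G G']
    [AddMonoidHomClass F G G'] (ψ : F) (u : M → G) (h : M) (n : ℕ) :
    (fwdDiff h)^[n] (fun y => ψ (u y)) = fun y => ψ ((fwdDiff h)^[n] u y) :=
  funext fun y => by simp [fwdDiff_iter_eq_sum_shift, map_sum, map_zsmul]

theorem fwdDiff_iter_eq_zero_of_lt {u : M → G} {h : M} {k j : ℕ}
    (hu : ∀ x, (fwdDiff h)^[k + 1] u x = 0) (hj : k < j) (x : M) : (fwdDiff h)^[j] u x = 0 := by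
  obtain ⟨i, rfl⟩ := Nat.exists_eq_add_of_lt hj
  rw [add_right_comm, add_comm, Function.iterate_add_apply, show (fwdDiff h)^[k + 1] u = 0 from
    funext hu]
  exact congrFun (Function.iterate_fixed (fwdDiff_const h 0) i) x

end ForwardDifference

section Newton

variable {R : Type*} [CommRing R] [Algebra ℚ R]

theorem eval_natCast_inv_factorial_smul_descPochhammer (j n : ℕ) :
    ((j.factorial : ℚ)⁻¹ • descPochhammer R j).eval (n : R) = n.choose j := by
  rw [eval_smul, descPochhammer_eval_eq_descFactorial, Nat.descFactorial_eq_factorial_mul_choose,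
    Nat.cast_mul, ← nsmul_eq_mul, ← Nat.cast_smul_eq_nsmul ℚ, smul_smul,
    inv_mul_cancel₀ (by positivity), one_smul]

theorem exists_polynomial_eval_add_nsmul [IsDomain R] {M : Type*} [AddCommMonoid M] {u : M → R}
    {h : M} {k : ℕ} (hu : ∀ x, (fwdDiff h)^[k + 1] u x = 0) (b : M) :
    ∃ Q : R[X], Q.natDegree ≤ k ∧ ∀ n : ℕ, u (b + n • h) = Q.eval (n : R) := by
  refine ⟨∑ j ∈ range (k + 1),
    C ((fwdDiff h)^[j] u b) * ((j.factorial : ℚ)⁻¹ • descPochhammer R j), ?_, fun n => ?_⟩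
  · refine natDegree_sum_le_of_forall_le _ _ fun j hj => (natDegree_C_mul_le _ _).trans ?_
    refine (natDegree_smul_le _ _).trans ?_
    rw [descPochhammer_natDegree]
    exact Nat.lt_succ_iff.mp (mem_range.mp hj)
  · have hvanish : ∀ j ≥ min (n + 1) (k + 1), n.choose j • (fwdDiff h)^[j] u b = 0 := by
      intro j hj
      rcases min_le_iff.mp hj with hn | hk
      · rw [Nat.choose_eq_zero_of_lt hn, zero_smul]
      · rw [fwdDiff_iter_eq_zero_of_lt hu hk, smul_zero]
    rw [shift_eq_sum_fwdDiff_iter h u n b, eventually_constant_sum hvanish (min_le_left _ _),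
      ← eventually_constant_sum hvanish (min_le_right _ _), eval_finsetSum]
    simp only [eval_mul, eval_C, eval_natCast_inv_factorial_smul_descPochhammer, nsmul_eq_mul,
      mul_comm]

theorem exists_polynomial_eval_add_div [IsDomain R] {u : ℚ → R} {k : ℕ}
    (hu : ∀ h x, (fwdDiff h)^[k + 1] u x = 0) (b : ℚ) {d : ℕ} (hd : d ≠ 0) :
    ∃ Q : R[X], Q.natDegree ≤ k ∧
      ∀ n : ℕ, u (b + n / d) = Q.eval (algebraMap ℚ R (b + n / d)) := by
  obtain ⟨Q, hQ, hQu⟩ := exists_polynomial_eval_add_nsmul (hu (1 / d)) b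
  refine ⟨Q.comp (C (algebraMap ℚ R d) * (X - C (algebraMap ℚ R b))),
    (natDegree_comp_le).trans ?_, fun n => ?_⟩
  · rw [← mul_one k]
    exact Nat.mul_le_mul hQ ((natDegree_C_mul_le _ _).trans (natDegree_X_sub_C_le _))
  · have hn : (d : ℚ) * (b + n / d - b) = n := by field_simp; ring
    rw [eval_comp, eval_mul, eval_sub, eval_C, eval_C, eval_X, ← map_sub, ← map_mul, hn,
      map_natCast, ← hQu, nsmul_eq_mul, mul_one_div]

theorem exists_polynomial_of_fwdDiff_iter_eq_zero [IsDomain R] {u : ℚ → R} {k : ℕ}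
    (hu : ∀ h x, (fwdDiff h)^[k + 1] u x = 0) :
    ∃ q : R[X], q.natDegree ≤ k ∧ ∀ x, u x = q.eval (algebraMap ℚ R x) := by
  obtain ⟨q, hq, hqu⟩ := exists_polynomial_eval_add_div hu 0 one_ne_zero
  simp only [Nat.cast_one, div_one, zero_add] at hqu
  refine ⟨q, hq, fun x => ?_⟩
  -- both `x` and every natural number lie on the progression `-M + ℕ / d`
  set d := x.den
  set M := x.num.natAbs
  have hd : (d : ℚ) ≠ 0 := Nat.cast_ne_zero.mpr x.den_nz
  obtain ⟨Q, -, hQu⟩ := exists_polynomial_eval_add_div hu (-M) x.den_nz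
  have hQq : Q = q := by
    refine eq_of_infinite_eval_eq _ _ ((Set.infinite_range_of_injective
      ((algebraMap ℚ R).injective.comp Nat.cast_injective)).mono ?_)
    rintro _ ⟨m, rfl⟩
    have hm : -(M : ℚ) + (d * (m + M) : ℕ) / d = m := by
      field_simp
      push_cast
      ring
    have := hQu (d * (m + M))
    rw [hm, hqu] at this
    exact this.symm
  obtain ⟨n, hn⟩ := Int.eq_ofNat_of_zero_le (show 0 ≤ x.num + M * d by
    have h1 : (M : ℤ) = |x.num| := Int.natCast_natAbs _
    have h2 : (1 : ℤ) ≤ d := by exact_mod_cast x.den_pos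
    nlinarith [neg_abs_le x.num, abs_nonneg x.num])
  have hx : x = -M + n / d := by
    have hnq : (n : ℚ) = x.num + M * d := by exact_mod_cast hn.symm
    nth_rewrite 1 [← Rat.num_div_den x]
    rw [hnq]
    field_simp
    ring
  rw [hx, hQu, hQq]

end Newton

theorem Fin.cons_add_cons {α : Type*} [Add α] {n : ℕ} (a b : α) (x y : Fin n → α) :
    (Fin.cons (a + b) (x + y) : Fin (n + 1) → α) = Fin.cons a x + Fin.cons b y :=
  (Matrix.cons_add_cons a x b y).symm

namespace MvPolynomial

section Homogeneous

variable {R σ : Type*} [CommSemiring R]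

theorem IsHomogeneous.eval_smul {φ : MvPolynomial σ R} {n : ℕ} (hφ : φ.IsHomogeneous n)
    (t : R) (x : σ → R) : eval (t • x) φ = t ^ n * eval x φ := by
  rw [eval_eq, eval_eq, mul_sum]
  refine sum_congr rfl fun d hd => ?_
  simp only [Pi.smul_apply, smul_eq_mul, mul_pow, prod_mul_distrib, prod_pow_eq_pow_sum,
    ← hφ.degree_eq_sum_deg_support hd]
  ring

theorem eval_smul_eq_sum_homogeneousComponent (P : MvPolynomial σ R) (t : R) (x : σ → R) :
    eval (t • x) P =
      ∑ d ∈ range (P.totalDegree + 1), t ^ d * eval x (homogeneousComponent d P) := by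
  conv_lhs => rw [← sum_homogeneousComponent P]
  simp only [map_sum, (homogeneousComponent_isHomogeneous _ _).eval_smul]

theorem totalDegree_le_of_homogeneousComponent_eq_zero {P : MvPolynomial σ R} {k : ℕ}
    (h : ∀ d, k < d → homogeneousComponent d P = 0) : P.totalDegree ≤ k := by
  refine Finset.sup_le fun m hm => not_lt.mp fun hlt => mem_support_iff.mp hm ?_
  simpa [h m.degree hlt] using (coeff_homogeneousComponent m.degree P m).symm

end Homogeneous

variable {K σ : Type*} [Field K] [CharZero K]

theorem eq_of_eval_ratCast_eq {P Q : MvPolynomial σ K}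
    (h : ∀ x : σ → ℚ, eval (fun i => (x i : K)) P = eval (fun i => (x i : K)) Q) : P = Q := by
  refine funext_set (fun _ => Set.range ((↑) : ℚ → K))
    (fun _ => Set.infinite_range_of_injective Rat.cast_injective) fun x hx => ?_
  choose y hy using fun i => hx i (Set.mem_univ i)
  obtain rfl : (fun i => (y i : K)) = x := _root_.funext hy
  exact h y

theorem homogeneousComponent_eq_zero_of_eval_smul_ratCast {P : MvPolynomial σ K} {k : ℕ}
    (hP : ∀ s : σ → ℚ, ∃ q : K[X], q.natDegree ≤ k ∧
      ∀ t : ℚ, eval ((t : K) • fun i => (s i : K)) P = q.eval (t : K))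
    {d : ℕ} (hd : k < d) : homogeneousComponent d P = 0 := by
  rcases le_or_gt d P.totalDegree with hdP | hdP
  swap
  · exact homogeneousComponent_eq_zero _ _ hdP
  refine eq_of_eval_ratCast_eq fun s => ?_
  obtain ⟨q, hq, hqP⟩ := hP s
  set W : K[X] := ∑ e ∈ range (P.totalDegree + 1),
    Polynomial.C (eval (fun i => (s i : K)) (homogeneousComponent e P)) * Polynomial.X ^ e
  have hWq : W = q := by
    refine eq_of_infinite_eval_eq _ _
      ((Set.infinite_range_of_injective Rat.cast_injective).mono ?_)
    rintro _ ⟨t, rfl⟩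
    rw [Set.mem_ofPred_eq, ← hqP, eval_smul_eq_sum_homogeneousComponent, eval_finsetSum]
    simp only [Polynomial.eval_mul, Polynomial.eval_C, Polynomial.eval_pow, Polynomial.eval_X,
      mul_comm]
  have hcoeff := congrArg (Polynomial.coeff · d) hWq
  simp only [W, finsetSum_coeff, coeff_C_mul_X_pow] at hcoeff
  rw [sum_ite_eq, if_pos (mem_range.mpr (Nat.lt_succ_of_le hdP)),
    coeff_eq_zero_of_natDegree_lt (hq.trans_lt hd)] at hcoeff
  rw [hcoeff, map_zero]

end MvPolynomial

open MvPolynomial in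
theorem exists_mvPolynomial_of_fwdDiff_iter_eq_zero {K : Type*} [Field K] [CharZero K] {k p : ℕ}
    {g : (Fin p → ℚ) → K} (hg : ∀ h x, (fwdDiff h)^[k + 1] g x = 0) :
    ∃ P : MvPolynomial (Fin p) K, ∀ x, g x = eval (fun i => (x i : K)) P := by
  induction p with
  | zero => exact ⟨C (g 0), fun x => by rw [MvPolynomial.eval_C, Subsingleton.elim x 0]⟩
  | succ p ih =>
    have hslice : ∀ a, ∃ P : MvPolynomial (Fin p) K,
        ∀ x, g (Fin.cons a x) = eval (fun i => (x i : K)) P := fun a => ih fun h x => by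
      rw [fwdDiff_iter_comp_of_map_add (h' := Fin.cons 0 h) (fun y => by
        rw [← Fin.cons_add_cons, add_zero]) g]
      exact hg _ _
    choose u hu using hslice
    -- at rational points the differences of `u` are those of `g` along the first coordinate
    have hdu : ∀ h a, (fwdDiff h)^[k + 1] u a = 0 := fun h a =>
      eq_of_eval_ratCast_eq fun x => by
        rw [map_zero, ← congrFun (fwdDiff_iter_hom_comp (MvPolynomial.eval _) u h (k + 1)) a]
        simp only [← hu]
        rw [fwdDiff_iter_comp_of_map_add (h' := Fin.cons h 0) (fun y => by
          rw [← Fin.cons_add_cons, add_zero]) g]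
        exact hg _ _
    obtain ⟨q, -, hq⟩ := exists_polynomial_of_fwdDiff_iter_eq_zero hdu
    refine ⟨(finSuccEquiv K p).symm q, fun x => ?_⟩
    obtain ⟨a, y, rfl⟩ : ∃ a y, x = Fin.cons a y := ⟨x 0, Fin.tail x, (Fin.cons_self_tail x).symm⟩
    rw [hu, hq, ← (finSuccEquiv K p).apply_symm_apply q, eval_polynomial_eval_finSuccEquiv,
      (finSuccEquiv K p).apply_symm_apply q]
    congr 2 with i
    cases i using Fin.cases <;> simp

open MvPolynomial in
theorem exists_mvPolynomial_totalDegree_le_of_fwdDiff_iter_eq_zero {K : Type*} [Field K]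
    [CharZero K] {k p : ℕ} {g : (Fin p → ℚ) → K} (hg : ∀ h x, (fwdDiff h)^[k + 1] g x = 0) :
    ∃ P : MvPolynomial (Fin p) K, P.totalDegree ≤ k ∧ ∀ x, g x = eval (fun i => (x i : K)) P := by
  obtain ⟨P, hP⟩ := exists_mvPolynomial_of_fwdDiff_iter_eq_zero hg
  refine ⟨P, totalDegree_le_of_homogeneousComponent_eq_zero fun d hd =>
    homogeneousComponent_eq_zero_of_eval_smul_ratCast (fun s => ?_) hd, hP⟩
  obtain ⟨q, hq, hqg⟩ := exists_polynomial_of_fwdDiff_iter_eq_zero (u := fun t : ℚ => g (t • s))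
    fun h x => by
      rw [fwdDiff_iter_comp_of_map_add (h' := h • s) (fun y => add_smul y h s) g]
      exact hg _ _
  refine ⟨q, hq, fun t => ?_⟩
  have hts : (fun i => ((t • s) i : K)) = (t : K) • fun i => (s i : K) := by
    ext i
    simp
  rw [← hts, ← hP, hqg, eq_ratCast]

theorem polynomialFunction_ridge_on_rationals_general (k p : ℕ)
    (f : ℝ → ℝ) (hf : IsPolynomialFunction k f) (ξ : Fin p → ℝ) :
    ∃ P : MvPolynomial (Fin p) ℝ, P.totalDegree ≤ k ∧
      ∀ x : Fin p → ℚ,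
        f (∑ i : Fin p, ξ i * (x i : ℝ)) =
          MvPolynomial.eval (fun i => (x i : ℝ)) P :=
  exists_mvPolynomial_totalDegree_le_of_fwdDiff_iter_eq_zero fun h x => by
    rw [fwdDiff_iter_comp_of_map_add (h' := ∑ i, ξ i * h i)
      (fun y => by simp [mul_add, sum_add_distrib]) f]
    exact hf _ _

/-- Lemma 3.1: if `f` is a polynomial function of order `k`, then for any fixed reals
`ξ₁, …, ξ_p` the function `(x₁, …, x_p) ↦ f (ξ₁ x₁ + ⋯ + ξ_p x_p)`, restricted to
rational vectors, is an ordinary polynomial of total degree at most `k`. -/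
theorem polynomialFunction_ridge_on_rationals (k p : ℕ) (hk : 1 ≤ k) (hp : 1 ≤ p)
    (f : ℝ → ℝ) (hf : IsPolynomialFunction k f) (ξ : Fin p → ℝ) :
    ∃ P : MvPolynomial (Fin p) ℝ, P.totalDegree ≤ k ∧
      ∀ x : Fin p → ℚ,
        f (∑ i : Fin p, ξ i * (x i : ℝ)) =
          MvPolynomial.eval (fun i => (x i : ℝ)) P :=
  polynomialFunction_ridge_on_rationals_general k p f hf ξ
end

section
/- Let k ≥ 1 and let f : ℝ → ℝ be a polynomial function of order k. Then there exists a polynomial function H : ℝ → ℝ of order k+1 such that H(0) = 0 and f(x) = H(x+1) − H(x) for all x ∈ ℝ. -/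
open Finset Function Polynomial fwdDiff

section FwdDiff

variable {M G : Type*} [AddCommMonoid M] [AddCommGroup G]

theorem fwdDiff_iter_zero (h : M) (n : ℕ) : Δ_[h] ^[n] (0 : M → G) = 0 :=
  iterate_fixed (fwdDiff_const h 0) n

theorem fwdDiff_commute (a b : M) : Function.Commute (Δ_[a] : (M → G) → M → G) Δ_[b] :=
  fun f => funext fun x => by
    simp only [fwdDiff, add_right_comm]
    abel

theorem fwdDiff_iter_comm (a b : M) (m n : ℕ) (f : M → G) :
    Δ_[a] ^[m] (Δ_[b] ^[n] f) = Δ_[b] ^[n] (Δ_[a] ^[m] f) :=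
  (fwdDiff_commute a b).iterate_iterate m n f

theorem fwdDiff_iter_comp_nsmul (v y : M) (u : M → G) (n : ℕ) :
    Δ_[1] ^[n] (fun j : ℕ => u (y + j • v)) = fun j => Δ_[v] ^[n] u (y + j • v) := by
  induction n with
  | zero => rfl
  | succ n ih =>
    funext j
    simp only [iterate_succ_apply', ih, fwdDiff, succ_nsmul, add_assoc]

theorem apply_add_nsmul_of_fwdDiff_eq_zero {h : M} {w : M → G} (hw : Δ_[h] w = 0) (y : M)
    (t : ℕ) : w (y + t • h) = w y := by
  induction t with
  | zero => simp
  | succ t ih => rw [succ_nsmul, ← add_assoc, ← ih]; exact sub_eq_zero.1 (congrFun hw _)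

theorem apply_add_nsmul_of_fwdDiff_fwdDiff_eq_zero {h : M} {w : M → G}
    (hw : Δ_[h] (Δ_[h] w) = 0) (y : M) (t : ℕ) : w (y + t • h) = w y + t • Δ_[h] w y := by
  induction t with
  | zero => simp
  | succ t ih =>
    have hstep : w (y + t • h + h) = w (y + t • h) + Δ_[h] w (y + t • h) :=
      (add_sub_cancel _ _).symm
    rw [succ_nsmul, ← add_assoc, hstep, apply_add_nsmul_of_fwdDiff_eq_zero hw, ih, succ_nsmul,
      add_assoc]

theorem fwdDiff_nsmul_apply (g : M) (i : ℕ) (u : M → G) (y : M) :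
    Δ_[i • g] u y = ∑ t ∈ range i, Δ_[g] u (y + t • g) := by
  simp only [fwdDiff, add_assoc, ← succ_nsmul]
  rw [Finset.sum_range_sub (fun t => u (y + t • g)), zero_smul, add_zero]

theorem fwdDiff_nsmul_iter_eq_pow_smul {g : M} {u : M → G} {n : ℕ}
    (hu : Δ_[g] ^[n + 1] u = 0) (i : ℕ) : Δ_[i • g] ^[n] u = i ^ n • Δ_[g] ^[n] u := by
  induction n generalizing u with
  | zero => simp
  | succ n ih =>
    funext y
    have hDu : Δ_[g] ^[n + 1] (Δ_[g] u) = 0 := by rwa [← iterate_succ_apply]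
    have hper : Δ_[g] (Δ_[g] ^[n + 1] u) = 0 := by rwa [← iterate_succ_apply' (f := Δ_[g])]
    have hsum : Δ_[i • g] u = ∑ t ∈ range i, fun z => Δ_[g] u (z + t • g) := by
      funext z
      rw [fwdDiff_nsmul_apply, Finset.sum_apply]
    calc Δ_[i • g] ^[n + 1] u y
        = ∑ t ∈ range i, Δ_[i • g] ^[n] (Δ_[g] u) (y + t • g) := by
          rw [iterate_succ_apply, hsum, fwdDiff_iter_finsetSum, Finset.sum_apply]
          simp only [fwdDiff_iter_comp_add]
      _ = ∑ t ∈ range i, i ^ n • Δ_[g] ^[n + 1] u (y + t • g) := by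
          simp only [ih hDu, Pi.smul_apply, iterate_succ_apply]
      _ = (i ^ (n + 1) • Δ_[g] ^[n + 1] u) y := by
          simp only [apply_add_nsmul_of_fwdDiff_eq_zero hper, sum_const, card_range, smul_smul,
            Pi.smul_apply, pow_succ']

theorem fwdDiff_iter_pow_smul_eq_zero {F : M → G} {n : ℕ} (hF : ∀ v, Δ_[v] ^[n + 1] F = 0)
    (g h x : M) : Δ_[1] ^[n + 1] (fun i : ℕ => i ^ n • Δ_[g] ^[n] F (x + i • h)) 0 = 0 := by
  set c : ℕ → ℤ := fun i => (-1) ^ (n + 1 - i) * (n + 1).choose i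
  set Φ : ℕ → ℕ → G := fun i j => F (x + i • h + j • (i • g))
  have hline : ∑ i ∈ range (n + 1 + 1), c i • Φ i = 0 := by
    funext j
    have := congrFun (hF (h + j • g)) x
    rw [fwdDiff_iter_eq_sum_shift] at this
    simp only [smul_add, ← add_assoc, Pi.zero_apply] at this
    simpa only [Finset.sum_apply, Pi.smul_apply, Pi.zero_apply, smul_comm j _ g, c, Φ] using this
  calc Δ_[1] ^[n + 1] (fun i : ℕ => i ^ n • Δ_[g] ^[n] F (x + i • h)) 0
      = ∑ i ∈ range (n + 1 + 1), c i • Δ_[i • g] ^[n] F (x + i • h) := by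
        simp only [fwdDiff_iter_eq_sum_shift (n := n + 1), fwdDiff_nsmul_iter_eq_pow_smul (hF g),
          zero_add, smul_eq_mul, mul_one, Pi.smul_apply, c]
    _ = Δ_[1] ^[n] (∑ i ∈ range (n + 1 + 1), c i • Φ i) 0 := by
        simp [Φ, fwdDiff_iter_comp_nsmul]
    _ = 0 := by
        rw [hline, fwdDiff_iter_zero]
        rfl

theorem fwdDiff_iter_natCast_pow_smul_apply_zero (m j : ℕ) (a : G) :
    Δ_[1] ^[m] (fun i : ℕ => i ^ j • a) 0 = Δ_[1] ^[m] (fun r : ℤ => r ^ j) 0 • a := by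
  simp [fwdDiff_iter_eq_sum_shift, Finset.sum_smul, mul_smul, ← natCast_zsmul]

theorem fwdDiff_eq_zero_of_fwdDiff_iter_pow_smul_eq_zero [IsAddTorsionFree G] {h : M}
    {ψ : M → G} {n : ℕ} (h2 : Δ_[h] (Δ_[h] ψ) = 0)
    (hrel : ∀ x, Δ_[1] ^[n + 1] (fun i : ℕ => i ^ n • ψ (x + i • h)) 0 = 0) :
    Δ_[h] ψ = 0 := by
  funext x
  have hlin : (fun i : ℕ => i ^ n • ψ (x + i • h)) =
      (fun i : ℕ => i ^ n • ψ x) + fun i : ℕ => i ^ (n + 1) • Δ_[h] ψ x := by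
    funext i
    simp [apply_add_nsmul_of_fwdDiff_fwdDiff_eq_zero h2, smul_add, smul_smul, pow_succ]
  have hx := hrel x
  rw [hlin, fwdDiff_iter_add, Pi.add_apply, fwdDiff_iter_natCast_pow_smul_apply_zero,
    fwdDiff_iter_natCast_pow_smul_apply_zero, fwdDiff_iter_pow_eq_zero_of_lt (lt_add_one n),
    fwdDiff_iter_eq_factorial] at hx
  simp only [Pi.zero_apply, zero_smul, Pi.natCast_apply, natCast_zsmul, zero_add,
    nsmul_eq_zero_iff] at hx
  exact hx.resolve_right (Nat.factorial_ne_zero _)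

theorem fwdDiff_iter_fwdDiff_eq_zero [IsAddTorsionFree G] {F : M → G} {n : ℕ}
    (hF : ∀ v, Δ_[v] ^[n + 1] F = 0) (c h : M) : Δ_[h] ^[n] (Δ_[c] F) = 0 := by
  have hstep : ∀ t, Δ_[c] ^[t + 2] (Δ_[h] ^[n] F) = 0 → Δ_[c] ^[t + 1] (Δ_[h] ^[n] F) = 0 := by
    intro t ht
    have hFt : ∀ v, Δ_[v] ^[n + 1] (Δ_[c] ^[t] F) = 0 := fun v => by
      rw [fwdDiff_iter_comm, hF, fwdDiff_iter_zero]
    rw [iterate_succ_apply', fwdDiff_iter_comm]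
    rw [iterate_succ_apply', iterate_succ_apply', fwdDiff_iter_comm] at ht
    exact fwdDiff_eq_zero_of_fwdDiff_iter_pow_smul_eq_zero ht
      (fwdDiff_iter_pow_smul_eq_zero hFt h c)
  have hdown : ∀ t, Δ_[c] ^[t + 1] (Δ_[h] ^[n] F) = 0 → Δ_[c] (Δ_[h] ^[n] F) = 0 := by
    intro t
    induction t with
    | zero => exact id
    | succ t ih => exact fun ht => ih (hstep t ht)
  rw [← iterate_one (Δ_[c]), fwdDiff_iter_comm, iterate_one]
  exact hdown n (by rw [fwdDiff_iter_comm, hF, fwdDiff_iter_zero])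

end FwdDiff

section Ring

variable {M R : Type*} [AddCommMonoid M] [Ring R]

theorem fwdDiff_mul (h : M) (f g : M → R) :
    Δ_[h] (f * g) = Δ_[h] f * g + (fun y => f (y + h)) * Δ_[h] g := by
  funext y
  simp only [fwdDiff, Pi.mul_apply, Pi.add_apply, sub_mul, mul_sub]
  abel

theorem fwdDiff_iter_mul_eq_zero {h : M} {a b : ℕ} {f g : M → R} (hf : Δ_[h] ^[a + 1] f = 0)
    (hg : Δ_[h] ^[b + 1] g = 0) : Δ_[h] ^[a + b + 1] (f * g) = 0 := by
  induction hs : a + b generalizing a b f g with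
  | zero =>
    obtain ⟨rfl, rfl⟩ : a = 0 ∧ b = 0 := by omega
    rw [iterate_one] at hf hg ⊢
    simp [fwdDiff_mul, hf, hg]
  | succ s ih =>
    rw [iterate_succ_apply, fwdDiff_mul, fwdDiff_iter_add]
    have h1 : Δ_[h] ^[s + 1] (Δ_[h] f * g) = 0 := by
      rcases a with _ | a
      · rw [iterate_one] at hf
        rw [hf, zero_mul, fwdDiff_iter_zero]
      · exact ih (a := a) (by rwa [← iterate_succ_apply]) hg (by omega)
    have h2 : Δ_[h] ^[s + 1] ((fun y => f (y + h)) * Δ_[h] g) = 0 := by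
      rcases b with _ | b
      · rw [iterate_one] at hg
        rw [hg, mul_zero, fwdDiff_iter_zero]
      · refine ih (a := a) (b := b) (funext fun y => ?_) (by rwa [← iterate_succ_apply]) (by omega)
        rw [fwdDiff_iter_comp_add, hf]
        rfl
    rw [h1, h2, add_zero]

end Ring

theorem Polynomial.fwdDiff_iter_eval_eq_zero {R : Type*} [CommRing R] {P : R[X]} {n : ℕ}
    (hP : P.natDegree < n) (h : R) : Δ_[h] ^[n] P.eval = 0 := by
  funext x
  have hdeg : (P.comp (C h * X + C x)).natDegree < n :=
    calc (P.comp (C h * X + C x)).natDegree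
        ≤ P.natDegree * (C h * X + C x).natDegree := natDegree_comp_le
      _ ≤ P.natDegree * 1 := Nat.mul_le_mul_left _ natDegree_linear_le
      _ < n := by rwa [mul_one]
  have := congrFun (fwdDiff_iter_eq_zero_of_degree_lt hdeg) 0
  simp only [fwdDiff_iter_eq_sum_shift, eval_comp, eval_add, eval_mul, eval_C, eval_X, zero_add,
    nsmul_eq_mul, mul_one, Pi.zero_apply] at this ⊢
  simpa only [mul_comm h, add_comm x] using this

theorem isPolynomialFunction_iff {k : ℕ} {f : ℝ → ℝ} :
    IsPolynomialFunction k f ↔ ∀ h, Δ_[h] ^[k + 1] f = 0 := by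
  simp only [IsPolynomialFunction, funext_iff, Pi.zero_apply]
  exact forall_comm

namespace IsPolynomialFunction

variable {k : ℕ} {f : ℝ → ℝ}

theorem mul {a b : ℕ} {g : ℝ → ℝ} (hf : IsPolynomialFunction a f)
    (hg : IsPolynomialFunction b g) : IsPolynomialFunction (a + b) (f * g) :=
  isPolynomialFunction_iff.2 fun h =>
    fwdDiff_iter_mul_eq_zero (isPolynomialFunction_iff.1 hf h) (isPolynomialFunction_iff.1 hg h)

theorem sum {ι : Type*} {s : Finset ι} {F : ι → ℝ → ℝ}
    (hF : ∀ i ∈ s, IsPolynomialFunction k (F i)) : IsPolynomialFunction k (∑ i ∈ s, F i) :=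
  isPolynomialFunction_iff.2 fun h => by
    rw [fwdDiff_iter_finsetSum]
    exact sum_eq_zero fun i hi => isPolynomialFunction_iff.1 (hF i hi) h

theorem fwdDiff_iter {i : ℕ} (hf : IsPolynomialFunction (k + i) f) (c : ℝ) :
    IsPolynomialFunction k (Δ_[c] ^[i] f) := by
  induction i generalizing k with
  | zero => exact hf
  | succ i ih =>
    rw [iterate_succ_apply']
    have := ih (k := k + 1) (by rwa [add_right_comm, add_assoc])
    exact isPolynomialFunction_iff.2
      (fwdDiff_iter_fwdDiff_eq_zero (isPolynomialFunction_iff.1 this) c)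

end IsPolynomialFunction

theorem Polynomial.isPolynomialFunction_eval {P : ℝ[X]} {k : ℕ} (hP : P.natDegree ≤ k) :
    IsPolynomialFunction k P.eval :=
  isPolynomialFunction_iff.2 (fwdDiff_iter_eval_eq_zero (Nat.lt_succ_of_le hP))

noncomputable def unitAntidiffCoeff (i : ℕ) : ℝ[X] :=
  C ((-1 : ℝ) ^ i / (i + 1).factorial) * ascPochhammer ℝ (i + 1)

noncomputable def unitAntidifference (k : ℕ) (f : ℝ → ℝ) : ℝ → ℝ :=
  ∑ i ∈ range (k + 1), (unitAntidiffCoeff i).eval * Δ_[1] ^[i] f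

theorem unitAntidiffCoeff_eval_zero (i : ℕ) : (unitAntidiffCoeff i).eval 0 = 0 := by
  simp [unitAntidiffCoeff]

theorem natDegree_unitAntidiffCoeff_le (i : ℕ) : (unitAntidiffCoeff i).natDegree ≤ i + 1 :=
  (natDegree_C_mul_le _ _).trans (ascPochhammer_natDegree ℝ (i + 1)).le

theorem unitAntidiffCoeff_zero_eval (x : ℝ) : (unitAntidiffCoeff 0).eval x = x := by
  simp [unitAntidiffCoeff]

theorem unitAntidiffCoeff_succ_eval_add_one (i : ℕ) (x : ℝ) :
    (unitAntidiffCoeff (i + 1)).eval (x + 1) =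
      (unitAntidiffCoeff (i + 1)).eval x - (unitAntidiffCoeff i).eval (x + 1) := by
  have := congrArg (Polynomial.eval x) (ascPochhammer_succ_comp_X_add_one ℝ (i + 1))
  simp only [eval_comp, eval_add, eval_X, eval_one, nsmul_eq_mul, eval_mul, eval_natCast] at this
  simp only [unitAntidiffCoeff, eval_mul, eval_C, this, Nat.factorial_succ (i + 1)]
  push_cast
  field_simp
  ring

theorem unitAntidifference_succ (k : ℕ) (f : ℝ → ℝ) :
    unitAntidifference (k + 1) f =
      unitAntidifference k f + (unitAntidiffCoeff (k + 1)).eval * Δ_[1] ^[k + 1] f :=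
  sum_range_succ _ _

theorem unitAntidifference_apply_zero (k : ℕ) (f : ℝ → ℝ) : unitAntidifference k f 0 = 0 := by
  simp [unitAntidifference, unitAntidiffCoeff_eval_zero]

theorem unitAntidifference_add_one_sub (k : ℕ) (f : ℝ → ℝ) (x : ℝ) :
    unitAntidifference k f (x + 1) - unitAntidifference k f x =
      f x + (unitAntidiffCoeff k).eval (x + 1) * Δ_[1] ^[k + 1] f x := by
  induction k with
  | zero =>
    rw [unitAntidifference, sum_range_one]
    simp only [Pi.mul_apply, unitAntidiffCoeff_zero_eval, iterate_zero, id_eq, zero_add,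
      iterate_one, fwdDiff]
    ring
  | succ k ih =>
    have hD : Δ_[1] ^[k + 1] f (x + 1) = Δ_[1] ^[k + 1] f x + Δ_[1] ^[k + 2] f x := by
      rw [iterate_succ_apply' _ (k + 1)]
      exact (add_sub_cancel _ _).symm
    simp only [unitAntidifference_succ, Pi.add_apply, Pi.mul_apply]
    rw [unitAntidiffCoeff_succ_eval_add_one, hD]
    linear_combination ih

theorem IsPolynomialFunction.unitAntidifference {k : ℕ} {f : ℝ → ℝ}
    (hf : IsPolynomialFunction k f) : IsPolynomialFunction (k + 1) (unitAntidifference k f) :=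
  IsPolynomialFunction.sum fun i hi => by
    have hik : i ≤ k := Nat.lt_succ_iff.1 (mem_range.1 hi)
    have hDf : IsPolynomialFunction (k - i) (Δ_[1] ^[i] f) :=
      IsPolynomialFunction.fwdDiff_iter (by rwa [Nat.sub_add_cancel hik]) 1
    have := (isPolynomialFunction_eval (natDegree_unitAntidiffCoeff_le i)).mul hDf
    rwa [show i + 1 + (k - i) = k + 1 by omega] at this

theorem polynomialFunction_eq_unit_difference_general (k : ℕ)
    (f : ℝ → ℝ) (hf : IsPolynomialFunction k f) :
    ∃ H : ℝ → ℝ, IsPolynomialFunction (k + 1) H ∧ H 0 = 0 ∧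
      ∀ x : ℝ, f x = H (x + 1) - H x := by
  refine ⟨unitAntidifference k f, hf.unitAntidifference, unitAntidifference_apply_zero k f,
    fun x => ?_⟩
  rw [unitAntidifference_add_one_sub, congrFun (isPolynomialFunction_iff.1 hf 1) x, Pi.zero_apply,
    mul_zero, add_zero]

/-- Lemma 3.2: every polynomial function `f` of order `k` is the unit difference
`H (x + 1) - H x` of a polynomial function `H` of order `k + 1` with `H 0 = 0`. -/
theorem polynomialFunction_eq_unit_difference (k : ℕ) (hk : 1 ≤ k)
    (f : ℝ → ℝ) (hf : IsPolynomialFunction k f) :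
    ∃ H : ℝ → ℝ, IsPolynomialFunction (k + 1) H ∧ H 0 = 0 ∧
      ∀ x : ℝ, f x = H (x + 1) - H x :=
  polynomialFunction_eq_unit_difference_general k f hf
end
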